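/- Let N ≥ 1 and let x^0 ∈ ℝ^m be fixed. Suppose q is a family of strictly positive transition densities on ℝ^m such that the conditional density of the chain factors as q(x^{1:N} | x^0) = ∏_{j=1}^N q(x^j | x^{j-1}), and suppose p is a family of strictly positive densities factoring as p(x^{0:N}) = p(x^N) ∏_{j=1}^N p(x^{j-1} | x^j), where x^{j:N} denotes (x^j, …, x^N). Define the posterior density q(x^j | x^{j+1}, x^0) := q(x^{j+1} | x^j) q(x^j | x^0) / q(x^{j+1} | x^0), where q(x^j | x^0) denotes the j-step marginal density of the chain started at x^0. Then the marginal density p(x^0) = ∫ p(x^{0:N}) dx^{1:N} satisfies the evidence lower bound ln p(x^0) ≥ E_{x^{1:N} ∼ q(· | x^0)} [ ln( p(x^N) / q(x^N | x^0) ) + ln p(x^0 | x^1) + Σ_{j=1}^{N-1} ln( p(x^j | x^{j+1}) / q(x^j | x^{j+1}, x^0) ) ]. -/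

import Mathlib

open MeasureTheory

/-- The `j`-step marginal density of the Markov chain with transition density `q`
(`q x' x` is the density of the next state at `x'` given current state `x`),
`kstepMarginal q j x x0 = q(x^j = x | x^0 = x0)`, obtained by integrating the product of
transitions over the intermediate states (written here via the Chapman–Kolmogorov
recursion, which agrees with the iterated integral of the product by Tonelli/Fubini). -/
noncomputable def kstepMarginal {m' : ℕ}
    (q : (Fin m' → ℝ) → (Fin m' → ℝ) → ℝ) :
    ℕ → (Fin m' → ℝ) → (Fin m' → ℝ) → ℝ
  | 0, _, _ => 0
  | 1, x, x0 => q x x0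
  | (j + 2), x, x0 => ∫ y, q x y * kstepMarginal q (j + 1) y x0

/-- The trajectory `x^0, x^1, …, x^N` determined by the initial point `x0 = x^0` and the
path `xs = x^{1:N}`: `traj x0 xs j = x^j` for `0 ≤ j ≤ N` (and junk `x0` beyond `N`). -/
def traj {m' N : ℕ} (x0 : Fin m' → ℝ) (xs : Fin N → (Fin m' → ℝ)) (j : ℕ) :
    Fin m' → ℝ :=
  if h : 1 ≤ j ∧ j ≤ N then xs ⟨j - 1, by omega⟩ else x0

/-!
Pointwise, the ELBO integrand is `log (p(x^{0:N}) / q(x^{1:N} | x^0))`, because the marginals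
`q(x^j | x^0)` in the posteriors telescope. The forward density integrates to `1` (integrate out
the last state and induct on `N`), so the bound is Jensen's inequality for `log`. Concretely, with
`c = ∫ p`, the inequality `log t ≤ t - 1` at `t = p / (c q)` gives
`q log (p / q) ≤ q log c + p / c - q`, and integrating yields `E_q [log (p / q)] ≤ log c`.
-/

open Real

section Gibbs

variable {α : Type*} [MeasurableSpace α] {μ : Measure α} {P Q : α → ℝ}

lemma mul_log_div_le {p q c : ℝ} (hp : 0 < p) (hq : 0 < q) (hc : 0 < c) :
    q * log (p / q) ≤ q * log c + (p / c - q) := by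
  have h := log_le_sub_one_of_pos (div_pos hp (mul_pos hc hq))
  rw [log_div hp.ne' (mul_pos hc hq).ne', log_mul hc.ne' hq.ne'] at h
  have h' := mul_le_mul_of_nonneg_left h hq.le
  have hqp : q * (p / (c * q) - 1) = p / c - q := by field_simp
  rw [hqp] at h'
  rw [log_div hp.ne' hq.ne']
  linarith

theorem integral_mul_log_div_le_log_integral (hP : ∀ x, 0 < P x) (hQ : ∀ x, 0 < Q x)
    (hPint : Integrable P μ) (hQ1 : ∫ x, Q x ∂μ = 1)
    (hint : Integrable (fun x => Q x * log (P x / Q x)) μ) :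
    ∫ x, Q x * log (P x / Q x) ∂μ ≤ log (∫ x, P x ∂μ) := by
  have hQint : Integrable Q μ := Integrable.of_integral_ne_zero (by rw [hQ1]; exact one_ne_zero)
  have hμ : μ ≠ 0 := by
    rintro rfl
    simp at hQ1
  set c := ∫ x, P x ∂μ
  have hc : 0 < c := by
    rw [integral_pos_iff_support_of_nonneg (fun x => (hP x).le) hPint,
      Function.support_eq_univ fun x => (hP x).ne']
    exact Measure.measure_univ_pos.2 hμ
  calc ∫ x, Q x * log (P x / Q x) ∂μ
      ≤ ∫ x, Q x * log c + (P x / c - Q x) ∂μ :=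
        integral_mono hint ((hQint.mul_const _).add ((hPint.div_const c).sub hQint))
          fun x => mul_log_div_le (hP x) (hQ x) hc
    _ = log c := by
        rw [integral_add (f := fun x => Q x * log c) (g := fun x => P x / c - Q x)
            (hQint.mul_const _) ((hPint.div_const c).sub hQint),
          integral_sub (hPint.div_const c) hQint, integral_mul_const, integral_div, hQ1,
          div_self hc.ne']
        ring

end Gibbs

lemma lintegral_ofReal_eq_one {α : Type*} [MeasurableSpace α] {μ : Measure α} {f : α → ℝ}
    (hf : ∀ x, 0 ≤ f x) (h1 : ∫ x, f x ∂μ = 1) : ∫⁻ x, ENNReal.ofReal (f x) ∂μ = 1 := by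
  rw [← ofReal_integral_eq_lintegral_ofReal
    (Integrable.of_integral_ne_zero (by rw [h1]; exact one_ne_zero)) (ae_of_all _ hf),
    h1, ENNReal.ofReal_one]

section Trajectory

variable {m' : ℕ} {N : ℕ}

lemma traj_zero (x0 : Fin m' → ℝ) (xs : Fin N → Fin m' → ℝ) : traj x0 xs 0 = x0 := by
  simp [traj]

lemma measurable_traj (x0 : Fin m' → ℝ) (j : ℕ) :
    Measurable fun xs : Fin N → Fin m' → ℝ => traj x0 xs j := by
  unfold traj
  split_ifs
  exacts [measurable_pi_apply _, measurable_const]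

lemma traj_snoc_of_le (x0 y : Fin m' → ℝ) (ys : Fin N → Fin m' → ℝ) {j : ℕ} (hj : j ≤ N) :
    traj x0 (Fin.snoc ys y : Fin (N + 1) → Fin m' → ℝ) j = traj x0 ys j := by
  unfold traj
  by_cases h : 1 ≤ j ∧ j ≤ N
  · rw [dif_pos ⟨h.1, by omega⟩, dif_pos h]
    exact Fin.snoc_castSucc (α := fun _ => Fin m' → ℝ) y ys ⟨j - 1, by omega⟩
  · rw [dif_neg (by omega), dif_neg h]

lemma traj_snoc_last (x0 y : Fin m' → ℝ) (ys : Fin N → Fin m' → ℝ) :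
    traj x0 (Fin.snoc ys y : Fin (N + 1) → Fin m' → ℝ) (N + 1) = y := by
  unfold traj
  rw [dif_pos ⟨by omega, le_rfl⟩]
  exact Fin.snoc_last (α := fun _ => Fin m' → ℝ) _ _

end Trajectory

section Chain

variable {m' N : ℕ}

noncomputable def forwardDensity (q : (Fin m' → ℝ) → (Fin m' → ℝ) → ℝ) (x0 : Fin m' → ℝ)
    (xs : Fin N → Fin m' → ℝ) : ℝ :=
  ∏ j ∈ Finset.Icc 1 N, q (traj x0 xs j) (traj x0 xs (j - 1))

noncomputable def reverseDensity (pN : (Fin m' → ℝ) → ℝ)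
    (pcond : ℕ → (Fin m' → ℝ) → (Fin m' → ℝ) → ℝ) (x0 : Fin m' → ℝ)
    (xs : Fin N → Fin m' → ℝ) : ℝ :=
  pN (traj x0 xs N) * ∏ j ∈ Finset.Icc 1 N, pcond j (traj x0 xs (j - 1)) (traj x0 xs j)

lemma reverseDensity_pos {pN : (Fin m' → ℝ) → ℝ}
    {pcond : ℕ → (Fin m' → ℝ) → (Fin m' → ℝ) → ℝ} (hpN : ∀ a, 0 < pN a)
    (hpcond : ∀ j a b, 0 < pcond j a b) (x0 : Fin m' → ℝ) (xs : Fin N → Fin m' → ℝ) :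
    0 < reverseDensity pN pcond x0 xs :=
  mul_pos (hpN _) (Finset.prod_pos fun _ _ => hpcond _ _ _)

variable {q : (Fin m' → ℝ) → (Fin m' → ℝ) → ℝ}

lemma forwardDensity_snoc (x0 y : Fin m' → ℝ) (ys : Fin N → Fin m' → ℝ) :
    forwardDensity q x0 (Fin.snoc ys y : Fin (N + 1) → Fin m' → ℝ) =
      forwardDensity q x0 ys * q y (traj x0 ys N) := by
  rw [forwardDensity, Finset.prod_Icc_succ_top (by omega), traj_snoc_last, Nat.add_sub_cancel,
    traj_snoc_of_le _ _ _ le_rfl]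
  congr 1
  refine Finset.prod_congr rfl fun j hj => ?_
  have hjN := (Finset.mem_Icc.1 hj).2
  rw [traj_snoc_of_le _ _ _ hjN, traj_snoc_of_le _ _ _ (by omega)]

lemma forwardDensity_pos (hq : ∀ a b, 0 < q a b) (x0 : Fin m' → ℝ)
    (xs : Fin N → Fin m' → ℝ) : 0 < forwardDensity q x0 xs :=
  Finset.prod_pos fun _ _ => hq _ _

lemma forwardDensity_nonneg (hq0 : ∀ a b, 0 ≤ q a b) (x0 : Fin m' → ℝ)
    (xs : Fin N → Fin m' → ℝ) : 0 ≤ forwardDensity q x0 xs :=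
  Finset.prod_nonneg fun _ _ => hq0 _ _

lemma measurable_forwardDensity (hq : Measurable (Function.uncurry q)) (x0 : Fin m' → ℝ) :
    Measurable (forwardDensity (N := N) q x0) :=
  Finset.measurable_prod _ fun j _ =>
    hq.comp ((measurable_traj x0 j).prodMk (measurable_traj x0 (j - 1)))

lemma lintegral_forwardDensity (hq : Measurable (Function.uncurry q)) (hq0 : ∀ a b, 0 ≤ q a b)
    (hq1 : ∀ b, ∫ a, q a b = 1) (x0 : Fin m' → ℝ) :
    ∫⁻ xs : Fin N → Fin m' → ℝ, ENNReal.ofReal (forwardDensity q x0 xs) = 1 := by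
  induction N with
  | zero =>
    rw [Measure.volume_pi_eq_dirac]
    simp [forwardDensity]
  | succ n ih =>
    let e := MeasurableEquiv.piFinSuccAbove (fun _ : Fin (n + 1) => Fin m' → ℝ) (Fin.last n)
    have he : ∀ y ys, e.symm (y, ys) = Fin.snoc ys y := fun y ys => by
      simp only [e, MeasurableEquiv.piFinSuccAbove_symm_apply, Fin.insertNthEquiv_last]
      rfl
    have hmeas := (measurable_forwardDensity (N := n + 1) hq x0).ennreal_ofReal
    rw [← ((volume_preserving_piFinSuccAbove _ (Fin.last n)).symm e).lintegral_comp hmeas,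
      Measure.volume_eq_prod,
      lintegral_prod_symm (f := fun z => ENNReal.ofReal (forwardDensity q x0 (e.symm z)))
        (hmeas.comp e.symm.measurable).aemeasurable]
    have hinner : ∀ ys : Fin n → Fin m' → ℝ,
        ∫⁻ y, ENNReal.ofReal (forwardDensity q x0 (e.symm (y, ys))) =
          ENNReal.ofReal (forwardDensity q x0 ys) := fun ys => by
      simp_rw [he, forwardDensity_snoc, ENNReal.ofReal_mul (forwardDensity_nonneg hq0 _ _)]
      rw [lintegral_const_mul' _ _ ENNReal.ofReal_ne_top,
        lintegral_ofReal_eq_one (hq0 · _) (hq1 _), mul_one]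
    simp_rw [hinner]
    exact ih

lemma integral_forwardDensity (hq : Measurable (Function.uncurry q)) (hq0 : ∀ a b, 0 ≤ q a b)
    (hq1 : ∀ b, ∫ a, q a b = 1) (x0 : Fin m' → ℝ) :
    ∫ xs : Fin N → Fin m' → ℝ, forwardDensity q x0 xs = 1 := by
  rw [integral_eq_lintegral_of_nonneg_ae
      (ae_of_all _ (forwardDensity_nonneg hq0 x0))
      (measurable_forwardDensity hq x0).aestronglyMeasurable,
    lintegral_forwardDensity hq hq0 hq1, ENNReal.toReal_one]

end Chain

lemma sum_Icc_telescope (a b c : ℕ → ℝ) (h1 : c 1 = b 1) (n : ℕ) :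
    a 1 - c (n + 1) + ∑ j ∈ Finset.Icc 1 n, (a (j + 1) - (b (j + 1) + c j - c (j + 1))) =
      ∑ j ∈ Finset.Icc 1 (n + 1), (a j - b j) := by
  induction n with
  | zero => simp [h1]
  | succ n ih =>
    rw [Finset.sum_Icc_succ_top (by omega),
      Finset.sum_Icc_succ_top (a := 1) (b := n + 1) (by omega)]
    linarith

lemma elbo_integrand_eq_log_div {m' N : ℕ} (hN : 1 ≤ N) {x0 : Fin m' → ℝ}
    {q : (Fin m' → ℝ) → (Fin m' → ℝ) → ℝ} {pN : (Fin m' → ℝ) → ℝ}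
    {pcond : ℕ → (Fin m' → ℝ) → (Fin m' → ℝ) → ℝ}
    (hqpos : ∀ a b, 0 < q a b) (hpNpos : ∀ a, 0 < pN a) (hpcondpos : ∀ j a b, 0 < pcond j a b)
    (hmargpos : ∀ j, 1 ≤ j → ∀ a, 0 < kstepMarginal q j a x0) (xs : Fin N → Fin m' → ℝ) :
    log (pN (traj x0 xs N) / kstepMarginal q N (traj x0 xs N) x0) +
        log (pcond 1 x0 (traj x0 xs 1)) +
        ∑ j ∈ Finset.Icc 1 (N - 1),
          log (pcond (j + 1) (traj x0 xs j) (traj x0 xs (j + 1)) /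
            (q (traj x0 xs (j + 1)) (traj x0 xs j) * kstepMarginal q j (traj x0 xs j) x0 /
              kstepMarginal q (j + 1) (traj x0 xs (j + 1)) x0)) =
      log (reverseDensity pN pcond x0 xs / forwardDensity q x0 xs) := by
  obtain ⟨n, rfl⟩ : ∃ n, N = n + 1 := ⟨N - 1, by omega⟩
  rw [log_div (reverseDensity_pos hpNpos hpcondpos x0 xs).ne'
    (forwardDensity_pos hqpos x0 xs).ne']
  unfold reverseDensity forwardDensity
  set x := traj x0 xs
  have hx0 : x 0 = x0 := traj_zero x0 xs
  have hsummand : ∀ j ∈ Finset.Icc 1 n,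
      log (pcond (j + 1) (x j) (x (j + 1)) /
          (q (x (j + 1)) (x j) * kstepMarginal q j (x j) x0 /
            kstepMarginal q (j + 1) (x (j + 1)) x0)) =
        log (pcond (j + 1) (x (j + 1 - 1)) (x (j + 1))) -
          (log (q (x (j + 1)) (x (j + 1 - 1))) + log (kstepMarginal q j (x j) x0) -
            log (kstepMarginal q (j + 1) (x (j + 1)) x0)) := fun j hj => by
    have hm := hmargpos j (Finset.mem_Icc.1 hj).1 (x j)
    have hm' := hmargpos (j + 1) (by omega) (x (j + 1))
    rw [Nat.add_sub_cancel, log_div (hpcondpos _ _ _).ne' (div_pos (mul_pos (hqpos _ _) hm) hm').ne',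
      log_div (mul_pos (hqpos _ _) hm).ne' hm'.ne', log_mul (hqpos _ _).ne' hm.ne']
  have hfirst : log (kstepMarginal q 1 (x 1) x0) = log (q (x 1) (x (1 - 1))) := by
    rw [Nat.sub_self, hx0, kstepMarginal]
  have htel := sum_Icc_telescope (fun j => log (pcond j (x (j - 1)) (x j)))
    (fun j => log (q (x j) (x (j - 1)))) (fun j => log (kstepMarginal q j (x j) x0)) hfirst n
  simp only [Nat.sub_self, hx0] at htel
  rw [Nat.add_sub_cancel, Finset.sum_congr rfl hsummand,
    log_div (hpNpos _).ne' (hmargpos _ (by omega) _).ne',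
    log_mul (hpNpos _).ne' (Finset.prod_pos fun _ _ => hpcondpos _ _ _).ne',
    log_prod fun _ _ => (hpcondpos _ _ _).ne', log_prod fun _ _ => (hqpos _ _).ne',
    add_sub_assoc, ← Finset.sum_sub_distrib, ← htel]
  ring

theorem diffusion_elbo_general {m' N : ℕ} (hN : 1 ≤ N) (x0 : Fin m' → ℝ)
    (q : (Fin m' → ℝ) → (Fin m' → ℝ) → ℝ)
    (pN : (Fin m' → ℝ) → ℝ)
    (pcond : ℕ → (Fin m' → ℝ) → (Fin m' → ℝ) → ℝ)
    -- measurability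
    (hqmeas : Measurable (Function.uncurry q))
    -- strict positivity of all densities
    (hqpos : ∀ a b, 0 < q a b)
    (hpNpos : ∀ a, 0 < pN a)
    (hpcondpos : ∀ j a b, 0 < pcond j a b)
    (hmargpos : ∀ j, 1 ≤ j → ∀ a, 0 < kstepMarginal q j a x0)
    -- each density integrates to 1 in its first argument
    (hqint : ∀ b, ∫ a, q a b = 1)
    -- finiteness of the expectations involved
    (hPInt : Integrable (fun xs : Fin N → (Fin m' → ℝ) =>
      pN (traj x0 xs N) *
        ∏ j ∈ Finset.Icc 1 N, pcond j (traj x0 xs (j - 1)) (traj x0 xs j)))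
    (hElboInt : Integrable (fun xs : Fin N → (Fin m' → ℝ) =>
      (∏ j ∈ Finset.Icc 1 N, q (traj x0 xs j) (traj x0 xs (j - 1))) *
        (Real.log (pN (traj x0 xs N) / kstepMarginal q N (traj x0 xs N) x0) +
          Real.log (pcond 1 x0 (traj x0 xs 1)) +
          ∑ j ∈ Finset.Icc 1 (N - 1),
            Real.log (pcond (j + 1) (traj x0 xs j) (traj x0 xs (j + 1)) /
              (q (traj x0 xs (j + 1)) (traj x0 xs j) *
                  kstepMarginal q j (traj x0 xs j) x0 /
                kstepMarginal q (j + 1) (traj x0 xs (j + 1)) x0))))) :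
    Real.log (∫ xs : Fin N → (Fin m' → ℝ),
        pN (traj x0 xs N) *
          ∏ j ∈ Finset.Icc 1 N, pcond j (traj x0 xs (j - 1)) (traj x0 xs j)) ≥
      ∫ xs : Fin N → (Fin m' → ℝ),
        (∏ j ∈ Finset.Icc 1 N, q (traj x0 xs j) (traj x0 xs (j - 1))) *
          (Real.log (pN (traj x0 xs N) / kstepMarginal q N (traj x0 xs N) x0) +
            Real.log (pcond 1 x0 (traj x0 xs 1)) +
            ∑ j ∈ Finset.Icc 1 (N - 1),
              Real.log (pcond (j + 1) (traj x0 xs j) (traj x0 xs (j + 1)) /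
                (q (traj x0 xs (j + 1)) (traj x0 xs j) *
                    kstepMarginal q j (traj x0 xs j) x0 /
                  kstepMarginal q (j + 1) (traj x0 xs (j + 1)) x0))) := by
  simp only [elbo_integrand_eq_log_div hN hqpos hpNpos hpcondpos hmargpos] at hElboInt ⊢
  exact integral_mul_log_div_le_log_integral (reverseDensity_pos hpNpos hpcondpos x0)
    (forwardDensity_pos hqpos x0) hPInt
    (integral_forwardDensity hqmeas (fun a b => (hqpos a b).le) hqint x0) hElboInt

/-- Evidence lower bound: for strictly positive transition densities `q`
and a strictly positive reverse model `p(x^{0:N}) = p(x^N) ∏_{j=1}^N p(x^{j-1}|x^j)`,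
the log marginal `ln p(x^0) = ln ∫ p(x^{0:N}) dx^{1:N}` is at least the expectation, under
`x^{1:N} ∼ q(·|x^0) = ∏_{j=1}^N q(x^j|x^{j-1})`, of
`ln(p(x^N)/q(x^N|x^0)) + ln p(x^0|x^1) + ∑_{j=1}^{N-1} ln(p(x^j|x^{j+1})/q(x^j|x^{j+1},x^0))`,
where `q(x^j|x^{j+1},x^0) = q(x^{j+1}|x^j) q(x^j|x^0) / q(x^{j+1}|x^0)`. -/
theorem diffusion_elbo {m' N : ℕ} (hN : 1 ≤ N) (x0 : Fin m' → ℝ)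
    (q : (Fin m' → ℝ) → (Fin m' → ℝ) → ℝ)
    (pN : (Fin m' → ℝ) → ℝ)
    (pcond : ℕ → (Fin m' → ℝ) → (Fin m' → ℝ) → ℝ)
    -- measurability
    (hqmeas : Measurable (Function.uncurry q))
    (hpNmeas : Measurable pN)
    (hpcondmeas : ∀ j, Measurable (Function.uncurry (pcond j)))
    -- strict positivity of all densities
    (hqpos : ∀ a b, 0 < q a b)
    (hpNpos : ∀ a, 0 < pN a)
    (hpcondpos : ∀ j a b, 0 < pcond j a b)
    (hmargpos : ∀ j, 1 ≤ j → ∀ a, 0 < kstepMarginal q j a x0)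
    -- each density integrates to 1 in its first argument
    (hqint : ∀ b, ∫ a, q a b = 1)
    (hpNint : ∫ a, pN a = 1)
    (hpcondint : ∀ j b, ∫ a, pcond j a b = 1)
    -- finiteness of the expectations involved
    (hPInt : Integrable (fun xs : Fin N → (Fin m' → ℝ) =>
      pN (traj x0 xs N) *
        ∏ j ∈ Finset.Icc 1 N, pcond j (traj x0 xs (j - 1)) (traj x0 xs j)))
    (hElboInt : Integrable (fun xs : Fin N → (Fin m' → ℝ) =>
      (∏ j ∈ Finset.Icc 1 N, q (traj x0 xs j) (traj x0 xs (j - 1))) *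
        (Real.log (pN (traj x0 xs N) / kstepMarginal q N (traj x0 xs N) x0) +
          Real.log (pcond 1 x0 (traj x0 xs 1)) +
          ∑ j ∈ Finset.Icc 1 (N - 1),
            Real.log (pcond (j + 1) (traj x0 xs j) (traj x0 xs (j + 1)) /
              (q (traj x0 xs (j + 1)) (traj x0 xs j) *
                  kstepMarginal q j (traj x0 xs j) x0 /
                kstepMarginal q (j + 1) (traj x0 xs (j + 1)) x0))))) :
    Real.log (∫ xs : Fin N → (Fin m' → ℝ),
        pN (traj x0 xs N) *
          ∏ j ∈ Finset.Icc 1 N, pcond j (traj x0 xs (j - 1)) (traj x0 xs j)) ≥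
      ∫ xs : Fin N → (Fin m' → ℝ),
        (∏ j ∈ Finset.Icc 1 N, q (traj x0 xs j) (traj x0 xs (j - 1))) *
          (Real.log (pN (traj x0 xs N) / kstepMarginal q N (traj x0 xs N) x0) +
            Real.log (pcond 1 x0 (traj x0 xs 1)) +
            ∑ j ∈ Finset.Icc 1 (N - 1),
              Real.log (pcond (j + 1) (traj x0 xs j) (traj x0 xs (j + 1)) /
                (q (traj x0 xs (j + 1)) (traj x0 xs j) *
                    kstepMarginal q j (traj x0 xs j) x0 /
                  kstepMarginal q (j + 1) (traj x0 xs (j + 1)) x0))) :=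
  diffusion_elbo_general hN x0 q pN pcond hqmeas hqpos hpNpos hpcondpos hmargpos hqint hPInt
    hElboInt
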